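/- Let T be a contraction on a Banach space and λ ∈ σ(T) with |λ| = 1. Then |λ - 1| ≤ ω_T, where ω_T = inf over ε > 0 of the modified Apostol modulus φ̃_T(ε) = sup{‖x - Tx‖ : ‖x‖ ≤ 1, 1 - ‖Tx‖ ≤ ε}. (Amplitude of the boundary spectrum is bounded by ω_T.) -/

import Mathlib

/-!
A spectral value `μ` with `‖μ‖ = 1 ≥ r(T)` lies on the boundary of the spectrum. Near the boundary
the resolvent blows up, `‖R(ν)‖ ≥ ‖μ - ν‖⁻¹`, and normalising `R(ν) x` for `x` in the unit ball
gives unit vectors `v` with `‖μ v - T v‖` arbitrarily small. Such a `v` has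
`1 - ‖T v‖ ≤ ‖μ v - T v‖` and `‖v - T v‖ ≥ ‖μ - 1‖ - ‖μ v - T v‖`, so it witnesses
`‖μ - 1‖ ≤ φ̃_T(ε)` up to an arbitrarily small error, for every `ε > 0`.
-/

open scoped NNReal ENNReal

namespace spectrum

section NormedField

variable {𝕜 A : Type*} [NormedField 𝕜] [NormedRing A] [NormedAlgebra 𝕜 A] [CompleteSpace A]
  [NormOneClass A]

theorem inv_norm_sub_le_norm_resolvent {a : A} {μ ν : 𝕜} (hμ : μ ∈ spectrum 𝕜 a)
    (hν : ν ∈ resolventSet 𝕜 a) : ‖μ - ν‖⁻¹ ≤ ‖resolvent a ν‖ := by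
  have hd : 0 < ‖μ - ν‖ := norm_pos_iff.2 (sub_ne_zero.2 fun h ↦ hμ (by rwa [h]))
  have : Nontrivial A := NormOneClass.nontrivial
  obtain ⟨u, hu⟩ := hν
  rw [resolvent, ← hu, Ring.inverse_unit]
  by_contra! hlt
  have hdist : ‖(algebraMap 𝕜 A μ - a) - u‖ < ‖(↑u⁻¹ : A)‖⁻¹ := by
    rwa [hu, sub_sub_sub_cancel_right, ← map_sub, norm_algebraMap', lt_inv_comm₀ hd
      (Units.norm_pos u⁻¹)]
  exact hμ (u.ofNearby _ hdist).isUnit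

end NormedField

section RCLike

variable {𝕜 A : Type*} [RCLike 𝕜] [NormedRing A] [NormedAlgebra 𝕜 A]

theorem mem_frontier_of_spectralRadius_le {a : A} {μ : 𝕜} (hμ : μ ∈ spectrum 𝕜 a)
    (hr : spectralRadius 𝕜 a ≤ ‖μ‖₊) : μ ∈ frontier (spectrum 𝕜 a) := by
  have hball : spectrum 𝕜 a ⊆ Metric.closedBall 0 ‖μ‖ := fun k hk ↦ by
    have : (‖k‖₊ : ℝ≥0∞) ≤ ‖μ‖₊ := (le_iSup₂ (α := ℝ≥0∞) k hk).trans hr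
    rw [mem_closedBall_zero_iff, ← coe_nnnorm, ← coe_nnnorm]
    exact_mod_cast this
  refine ⟨subset_closure hμ, fun hint ↦ ?_⟩
  have := interior_mono hball hint
  rw [interior_closedBall'] at this
  simp at this

end RCLike

end spectrum

namespace ContinuousLinearMap

variable {𝕜 X : Type*} [RCLike 𝕜] [NormedAddCommGroup X] [NormedSpace 𝕜 X]

def IsApproxEigenvalue (T : X →L[𝕜] X) (μ : 𝕜) : Prop :=
  ∀ δ > 0, ∃ v : X, ‖v‖ = 1 ∧ ‖μ • v - T v‖ ≤ δ

theorem exists_norm_eq_one_norm_sub_lt_of_lt_norm_resolvent {T : X →L[𝕜] X} {ν : 𝕜}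
    (hν : ν ∈ resolventSet 𝕜 T) {r : ℝ} (hr : 0 < r) (hR : r⁻¹ < ‖resolvent T ν‖) :
    ∃ v : X, ‖v‖ = 1 ∧ ‖ν • v - T v‖ < r := by
  obtain ⟨x, hx, hRx⟩ := (resolvent T ν).exists_lt_apply_of_lt_opNorm hR
  set z := resolvent T ν x
  have hz : 0 < ‖z‖ := (inv_pos.2 hr).trans hRx
  have hxz : ν • z - T z = x := by
    have : (algebraMap 𝕜 (X →L[𝕜] X) ν - T) z = x := congr($(Ring.mul_inverse_cancel _ hν) x)
    simpa [Algebra.algebraMap_eq_smul_one] using this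
  refine ⟨(‖z‖⁻¹ : 𝕜) • z, norm_smul_inv_norm (norm_pos_iff.1 hz), ?_⟩
  calc ‖ν • (‖z‖⁻¹ : 𝕜) • z - T ((‖z‖⁻¹ : 𝕜) • z)‖ = ‖z‖⁻¹ * ‖x‖ := by
        rw [map_smul, smul_comm, ← smul_sub, hxz, norm_smul, norm_inv, RCLike.norm_ofReal,
          abs_norm]
    _ < r := by
        rw [inv_mul_lt_iff₀ hz]
        calc ‖x‖ < 1 := hx
          _ = r⁻¹ * r := (inv_mul_cancel₀ hr.ne').symm
          _ < ‖z‖ * r := by gcongr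

theorem isApproxEigenvalue_of_mem_frontier [CompleteSpace X] [Nontrivial X] {T : X →L[𝕜] X}
    {μ : 𝕜} (hμ : μ ∈ frontier (spectrum 𝕜 T)) : IsApproxEigenvalue T μ := by
  intro δ hδ
  have hμσ : μ ∈ spectrum 𝕜 T := (spectrum.isClosed T).frontier_subset hμ
  have hμρ : μ ∈ closure (resolventSet 𝕜 T) := by
    have : μ ∈ frontier (resolventSet 𝕜 T) := by rwa [← frontier_compl]
    exact frontier_subset_closure this
  obtain ⟨ν, hν, hdist⟩ := Metric.mem_closure_iff.1 hμρ (δ / 3) (by positivity)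
  rw [dist_eq_norm] at hdist
  have hd : 0 < ‖μ - ν‖ := norm_pos_iff.2 (sub_ne_zero.2 fun h ↦ hμσ (by rwa [h]))
  have hR : (2 * ‖μ - ν‖)⁻¹ < ‖resolvent T ν‖ :=
    calc (2 * ‖μ - ν‖)⁻¹ < ‖μ - ν‖⁻¹ := by gcongr; linarith
      _ ≤ ‖resolvent T ν‖ := spectrum.inv_norm_sub_le_norm_resolvent hμσ hν
  obtain ⟨v, hv, hνv⟩ := exists_norm_eq_one_norm_sub_lt_of_lt_norm_resolvent hν (by positivity) hR
  refine ⟨v, hv, ?_⟩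
  calc ‖μ • v - T v‖ = ‖(μ - ν) • v + (ν • v - T v)‖ := by rw [sub_smul]; abel_nf
    _ ≤ ‖μ - ν‖ + 2 * ‖μ - ν‖ := by
        grw [norm_add_le, norm_smul, hv, mul_one, hνv]
    _ ≤ δ := by linarith

/-- The modified Apostol modulus `φ̃_T(ε)`. -/
noncomputable def apostolModulus (T : X →L[𝕜] X) (ε : ℝ) : ℝ :=
  sSup {r : ℝ | ∃ x : X, ‖x‖ ≤ 1 ∧ 1 - ‖T x‖ ≤ ε ∧ r = ‖x - T x‖}

theorem IsApproxEigenvalue.norm_sub_one_le_apostolModulus {T : X →L[𝕜] X} {μ : 𝕜}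
    (hμ : IsApproxEigenvalue T μ) (h1 : ‖μ‖ = 1) {ε : ℝ} (hε : 0 < ε) :
    ‖μ - 1‖ ≤ apostolModulus T ε := by
  have hbdd : BddAbove {r : ℝ | ∃ x : X, ‖x‖ ≤ 1 ∧ 1 - ‖T x‖ ≤ ε ∧ r = ‖x - T x‖} := by
    refine ⟨1 + ‖T‖, ?_⟩
    rintro _ ⟨x, hx, -, rfl⟩
    calc ‖x - T x‖ ≤ ‖x‖ + ‖T‖ * ‖x‖ := (norm_sub_le _ _).trans (by gcongr; exact T.le_opNorm x)
      _ ≤ 1 + ‖T‖ := by nlinarith [norm_nonneg T]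
  refine le_of_forall_pos_le_add fun δ hδ ↦ ?_
  obtain ⟨v, hv, hμv⟩ := hμ (min δ ε) (lt_min hδ hε)
  have hTv : 1 - ‖T v‖ ≤ ‖μ • v - T v‖ := by
    simpa [norm_smul, h1, hv] using norm_sub_norm_le (μ • v) (T v)
  have hdiff : ‖μ - 1‖ ≤ ‖v - T v‖ + ‖μ • v - T v‖ := by
    calc ‖μ - 1‖ = ‖(μ • v - T v) - (v - T v)‖ := by
          have : μ • v - v = (μ - 1) • v := by rw [sub_smul, one_smul]
          rw [sub_sub_sub_cancel_right, this, norm_smul, hv, mul_one]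
      _ ≤ ‖v - T v‖ + ‖μ • v - T v‖ := (norm_sub_le _ _).trans_eq (add_comm _ _)
  have hmem : ‖v - T v‖ ∈ {r : ℝ | ∃ x : X, ‖x‖ ≤ 1 ∧ 1 - ‖T x‖ ≤ ε ∧ r = ‖x - T x‖} :=
    ⟨v, hv.le, hTv.trans (hμv.trans (min_le_right _ _)), rfl⟩
  calc ‖μ - 1‖ ≤ ‖v - T v‖ + min δ ε := hdiff.trans (by gcongr)
    _ ≤ apostolModulus T ε + δ := add_le_add (le_csSup hbdd hmem) (min_le_left _ _)

end ContinuousLinearMap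

theorem stmt16 {X : Type*} [NormedAddCommGroup X] [NormedSpace ℂ X] [CompleteSpace X]
    (T : X →L[ℂ] X) (hT : ‖T‖ = 1)
    (lam : ℂ) (hlam : lam ∈ spectrum ℂ T) (habs : ‖lam‖ = 1) :
    ‖lam - 1‖ ≤
      sInf {c : ℝ | ∃ ε : ℝ, 0 < ε ∧
        c = sSup {r : ℝ | ∃ x : X, ‖x‖ ≤ 1 ∧ 1 - ‖T x‖ ≤ ε ∧ r = ‖x - T x‖}} := by
  have : Nontrivial X := by
    by_contra h
    rw [not_nontrivial_iff_subsingleton] at h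
    simp [Subsingleton.elim T 0] at hT
  have hr : spectralRadius ℂ T ≤ ‖lam‖₊ := by
    have : ‖T‖₊ = ‖lam‖₊ := NNReal.eq (by simp [hT, habs])
    exact this ▸ spectrum.spectralRadius_le_nnnorm T
  have happrox :=
    T.isApproxEigenvalue_of_mem_frontier (spectrum.mem_frontier_of_spectralRadius_le hlam hr)
  refine le_csInf ⟨_, 1, one_pos, rfl⟩ ?_
  rintro c ⟨ε, hε, rfl⟩
  exact happrox.norm_sub_one_le_apostolModulus habs hε
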